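/- arXiv:1807.08295 — 2 statements merged into one kernel-verified Lean document; each statement's English description precedes it below -/
import Mathlib

section
/- Let G be a disconnected graph with k ≥ 2 connected components, at least two of which are nontrivial (have at least 2 vertices). Then the geodetic hull number of the complementary prism satisfies h(G\bar{G}) = k + 1. -/
open SimpleGraph

/-- The geodetic closed interval `I[u,v]`: `u`, `v`, and all vertices lying on
some shortest `u`–`v` path. -/
def geoInterval {V : Type*} (G : SimpleGraph V) (u v : V) : Set V :=
  {w | w = u ∨ w = v ∨ (G.Reachable u v ∧ G.dist u w + G.dist w v = G.dist u v)}

/-- A set is geodetically convex if it is closed under intervals. -/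
def IsGeoConvex {V : Type*} (G : SimpleGraph V) (S : Set V) : Prop :=
  ∀ u ∈ S, ∀ v ∈ S, geoInterval G u v ⊆ S

/-- The geodetic convex hull: the smallest convex set containing `S`. -/
def geoHull {V : Type*} (G : SimpleGraph V) (S : Set V) : Set V :=
  ⋂₀ {T | IsGeoConvex G T ∧ S ⊆ T}

/-- `S` is a hull set if its convex hull is the whole vertex set. -/
def IsHullSet {V : Type*} (G : SimpleGraph V) (S : Set V) : Prop :=
  geoHull G S = Set.univ

/-- The geodetic hull number: minimum cardinality of a hull set. -/
noncomputable def hullNumber {V : Type*} (G : SimpleGraph V) : ℕ :=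
  sInf {n | ∃ S : Set V, S.ncard = n ∧ IsHullSet G S}

/-- A vertex is simplicial if its closed neighborhood induces a clique. -/
def IsSimplicial {V : Type*} (G : SimpleGraph V) (v : V) : Prop :=
  ∀ a ∈ G.neighborSet v, ∀ b ∈ G.neighborSet v, a ≠ b → G.Adj a b

/-- The complementary prism `G G̅`: disjoint union of `G` (left copies) and its
complement (right copies), plus a perfect matching between corresponding vertices. -/
def compPrism {V : Type*} (G : SimpleGraph V) : SimpleGraph (V ⊕ V) where
  Adj x y :=
    match x, y with
    | .inl u, .inl w => G.Adj u w
    | .inr u, .inr w => u ≠ w ∧ ¬ G.Adj u w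
    | .inl u, .inr w => u = w
    | .inr u, .inl w => u = w
  symm := by
    constructor
    rintro (u | u) (w | w) h
    · exact h.symm
    · exact h.symm
    · exact h.symm
    · exact ⟨h.1.symm, fun a => h.2 a.symm⟩
  loopless := by
    constructor
    rintro (u | u) h
    · exact G.irrefl h
    · exact h.1 rfl

/-!
Since `G` is disconnected, `G Ḡ` is connected of diameter `3`: each vertex of the `Ḡ`-copy is
within distance `2` of every vertex, while the `G`-copies of vertices in different components
of `G` are at distance exactly `3`.

Lower bound: the `G`-copy of a component can only be left along matching edges, into the
`Ḡ`-copy, so its complement is convex and every hull set meets it. A hull set meeting each of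
these copies in exactly one vertex (a set `R`) and containing nothing else would lie in the
convex set `R ∪ R̄`, which misses part of a nontrivial component.

Upper bound: take one `G`-vertex per component plus a neighbour `u'` of the representative `u`
of a nontrivial component `C`. Geodesics between representatives of different components add
their partners in `Ḡ`; the geodesics of length `2` from `ū` to `ū'` pass through every `c̄` with
`c ∉ C`, and an edge of a second nontrivial component yields the `c̄` with `c ∈ C` in the same
way. Finally `c ∈ I(c̄, v)` for every neighbour `v` of `c`, so the hull spreads over the `G`-copy
of each component from its representative.
-/

open Sum

section Geodetic

variable {V : Type*} {G : SimpleGraph V} {S T : Set V} {u v w : V}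

theorem mem_geoInterval_iff (hG : G.Preconnected) :
    w ∈ geoInterval G u v ↔ G.dist u w + G.dist w v = G.dist u v := by
  refine ⟨?_, fun h => Or.inr (Or.inr ⟨hG u v, h⟩)⟩
  rintro (rfl | rfl | ⟨-, h⟩) <;> simp [*]

theorem geoInterval_subset_of_dist_le_one (hG : G.Preconnected) (h : G.dist u v ≤ 1) :
    geoInterval G u v ⊆ {u, v} := by
  intro w hw
  rw [mem_geoInterval_iff hG] at hw
  rcases Nat.eq_zero_or_pos (G.dist u w) with huw | huw
  · exact Or.inl ((hG u w).dist_eq_zero_iff.1 huw).symm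
  · exact Or.inr ((hG w v).dist_eq_zero_iff.1 (by omega))

theorem subset_geoHull (G : SimpleGraph V) (S : Set V) : S ⊆ geoHull G S :=
  fun _ hs => Set.mem_sInter.2 fun _ hT => hT.2 hs

theorem geoHull_subset (hT : IsGeoConvex G T) (hST : S ⊆ T) : geoHull G S ⊆ T :=
  Set.sInter_subset_of_mem ⟨hT, hST⟩

theorem isGeoConvex_geoHull (G : SimpleGraph V) (S : Set V) : IsGeoConvex G (geoHull G S) :=
  fun _ hu _ hv _ hw => Set.mem_sInter.2 fun T hT =>
    hT.1 _ (Set.mem_sInter.1 hu T hT) _ (Set.mem_sInter.1 hv T hT) hw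

theorem IsHullSet.eq_univ_of_subset (hS : IsHullSet G S) (hT : IsGeoConvex G T)
    (hST : S ⊆ T) : T = Set.univ :=
  Set.eq_univ_of_univ_subset (hS ▸ geoHull_subset hT hST)

theorem hullNumber_eq_of_isHullSet {n : ℕ} (hS : IsHullSet G S) (hSn : S.ncard = n)
    (hmin : ∀ T, IsHullSet G T → n ≤ T.ncard) : hullNumber G = n :=
  le_antisymm (Nat.sInf_le ⟨S, hSn, hS⟩)
    (le_csInf ⟨n, S, hSn, hS⟩ fun _ ⟨T, hT, hTh⟩ => hT ▸ hmin T hTh)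

end Geodetic

namespace SimpleGraph

variable {V : Type*} {G : SimpleGraph V} {u v : V}

theorem Reachable.mem_of_adj_closed {A : Set V} (hA : ∀ a b, G.Adj a b → a ∈ A → b ∈ A)
    (huv : G.Reachable u v) (hu : u ∈ A) : v ∈ A := by
  obtain ⟨p⟩ := huv
  induction p with
  | nil => exact hu
  | cons h _ ih => exact ih (hA _ _ h hu)

theorem exists_not_reachable (G : SimpleGraph V) [Nontrivial G.ConnectedComponent] (u : V) :
    ∃ v, ¬G.Reachable u v := by
  obtain ⟨C, hC⟩ := exists_ne (G.connectedComponentMk u)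
  obtain ⟨v, rfl⟩ := C.exists_rep
  exact ⟨v, fun h => hC (ConnectedComponent.sound h).symm⟩

theorem ConnectedComponent.exists_adj_of_supp_nontrivial {C : G.ConnectedComponent}
    (hC : C.supp.Nontrivial) (hv : v ∈ C.supp) : ∃ w, G.Adj v w := by
  obtain ⟨w, hw, hwv⟩ := hC.exists_ne v
  obtain ⟨p⟩ := C.reachable_of_mem_supp hv hw
  exact ⟨_, p.adj_snd (p.not_nil_of_ne hwv.symm)⟩

end SimpleGraph

namespace compPrism

variable {V : Type*} {G : SimpleGraph V} {u v a b c : V}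

@[simp] theorem adj_inl_inl : (compPrism G).Adj (inl u) (inl v) ↔ G.Adj u v := Iff.rfl

@[simp] theorem adj_inr_inr : (compPrism G).Adj (inr u) (inr v) ↔ u ≠ v ∧ ¬G.Adj u v :=
  Iff.rfl

@[simp] theorem adj_inl_inr : (compPrism G).Adj (inl u) (inr v) ↔ u = v := Iff.rfl

@[simp] theorem adj_inr_inl : (compPrism G).Adj (inr u) (inl v) ↔ u = v := Iff.rfl

@[simp] theorem dist_inl_inr_self : (compPrism G).dist (inl u) (inr u) = 1 :=
  dist_eq_one_iff_adj.2 rfl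

@[simp] theorem dist_inr_inl_self : (compPrism G).dist (inr u) (inl u) = 1 :=
  dist_eq_one_iff_adj.2 rfl

theorem adj_inr_inr_of_not_reachable (h : ¬G.Reachable u v) :
    (compPrism G).Adj (inr u) (inr v) :=
  ⟨fun huv => h (huv ▸ Reachable.refl u), fun hadj => h hadj.reachable⟩

theorem dist_inr_inr_of_not_reachable (h : ¬G.Reachable u v) :
    (compPrism G).dist (inr u) (inr v) = 1 :=
  dist_eq_one_iff_adj.2 (adj_inr_inr_of_not_reachable h)

variable [Nontrivial G.ConnectedComponent]

theorem exists_walk_inr_length_le_two (u : V) (y : V ⊕ V) :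
    ∃ p : (compPrism G).Walk (inr u) y, p.length ≤ 2 := by
  rcases y with v | v
  · by_cases huv : u = v
    · exact ⟨.cons (adj_inr_inl.2 huv) .nil, by simp⟩
    by_cases hadj : G.Adj u v
    · exact ⟨.cons (adj_inr_inl.2 rfl) (.cons (adj_inl_inl.2 hadj) .nil), by simp⟩
    · exact ⟨.cons (adj_inr_inr.2 ⟨huv, hadj⟩) (.cons (adj_inr_inl.2 rfl) .nil), by simp⟩
  · by_cases huv : u = v
    · exact huv ▸ ⟨.nil, by simp⟩
    by_cases hadj : G.Adj u v
    · obtain ⟨w, hw⟩ := G.exists_not_reachable u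
      have hwv : ¬G.Reachable w v := fun h => hw (hadj.reachable.trans h.symm)
      exact ⟨.cons (adj_inr_inr_of_not_reachable hw) (.cons (adj_inr_inr_of_not_reachable hwv)
        .nil), by simp⟩
    · exact ⟨.cons (adj_inr_inr.2 ⟨huv, hadj⟩) .nil, by simp⟩

theorem dist_inr_le_two (u : V) (y : V ⊕ V) : (compPrism G).dist (inr u) y ≤ 2 :=
  let ⟨p, hp⟩ := exists_walk_inr_length_le_two (G := G) u y
  (dist_le p).trans hp

variable (G) in
theorem preconnected : (compPrism G).Preconnected := by
  have hinr : ∀ x, ∃ u, (compPrism G).Reachable x (inr u) := by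
    rintro (u | u)
    · exact ⟨u, (adj_inl_inr.2 rfl).reachable⟩
    · exact ⟨u, .refl _⟩
  intro x y
  obtain ⟨u, hu⟩ := hinr x
  obtain ⟨p, -⟩ := exists_walk_inr_length_le_two (G := G) u y
  exact hu.trans ⟨p⟩

theorem dist_le_three (x y : V ⊕ V) : (compPrism G).dist x y ≤ 3 := by
  rcases x with u | u
  · obtain ⟨p, hp⟩ := exists_walk_inr_length_le_two (G := G) u y
    calc (compPrism G).dist (inl u) y ≤ (Walk.cons (adj_inl_inr.2 rfl) p).length := dist_le _
      _ ≤ 3 := by simp only [Walk.length_cons]; omega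
  · exact (dist_inr_le_two u y).trans (by norm_num)

theorem dist_inl_inr_of_ne (h : u ≠ v) : (compPrism G).dist (inl u) (inr v) = 2 :=
  le_antisymm (dist_comm.trans_le (dist_inr_le_two (G := G) v _))
    ((preconnected G _ _).one_lt_dist_of_ne_of_not_adj (by simp) (by simpa using h))

theorem dist_inr_inl_of_ne (h : u ≠ v) : (compPrism G).dist (inr u) (inl v) = 2 :=
  dist_comm.trans (dist_inl_inr_of_ne h.symm)

theorem dist_inr_inr_of_adj (h : G.Adj u v) : (compPrism G).dist (inr u) (inr v) = 2 :=
  le_antisymm (dist_inr_le_two (G := G) _ _)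
    ((preconnected G _ _).one_lt_dist_of_ne_of_not_adj (by simpa using h.ne) (by simp [h]))

theorem dist_inl_inl_of_not_reachable (h : ¬G.Reachable u v) :
    (compPrism G).dist (inl u) (inl v) = 3 := by
  have hcommon : (compPrism G).commonNeighbors (inl u) (inl v) = ∅ := by
    refine Set.eq_empty_of_forall_notMem ?_
    rintro (w | w) ⟨huw, hvw⟩
    · exact h ((adj_inl_inl.1 huw).reachable.trans (adj_inl_inl.1 hvw).reachable.symm)
    · obtain rfl : u = w := huw
      obtain rfl : v = u := hvw
      exact h (.refl _)
  have h2 := two_lt_edist_iff.2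
    ⟨inl_injective.ne fun huv : u = v => h (huv ▸ .rfl), fun hadj => h (adj_inl_inl.1 hadj).reachable,
      hcommon⟩
  rw [← (preconnected G _ _).coe_dist_eq_edist] at h2
  exact le_antisymm (dist_le_three _ _) (by exact_mod_cast h2)

theorem inr_mem_geoInterval_inl_inl (h : ¬G.Reachable u v) :
    inr u ∈ geoInterval (compPrism G) (inl u) (inl v) := by
  have hvu : v ≠ u := fun hvu => h (hvu ▸ .rfl)
  rw [mem_geoInterval_iff (preconnected G), dist_inl_inl_of_not_reachable h, dist_inl_inr_self,
    dist_inr_inl_of_ne hvu.symm]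

theorem inr_mem_geoInterval_inr_inr (hab : G.Adj a b) (hac : ¬G.Reachable a c) :
    inr c ∈ geoInterval (compPrism G) (inr a) (inr b) := by
  have hcb : ¬G.Reachable c b := fun h => hac (hab.reachable.trans h.symm)
  rw [mem_geoInterval_iff (preconnected G), dist_inr_inr_of_adj hab,
    dist_inr_inr_of_not_reachable hac, dist_inr_inr_of_not_reachable hcb]

theorem inl_mem_geoInterval_inr_inl (h : G.Adj u v) :
    inl u ∈ geoInterval (compPrism G) (inr u) (inl v) := by
  rw [mem_geoInterval_iff (preconnected G), dist_inr_inl_self, dist_inr_inl_of_ne h.ne,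
    dist_eq_one_iff_adj.2 (adj_inl_inl.2 h)]

theorem geoInterval_subset_of_not_reachable (h : ¬G.Reachable u v) {x y : V ⊕ V}
    (hx : x ∈ ({inl u, inr u} : Set (V ⊕ V))) (hy : y ∈ ({inl v, inr v} : Set (V ⊕ V))) :
    geoInterval (compPrism G) x y ⊆ {inl u, inr u} ∪ {inl v, inr v} := by
  intro w hw
  rw [mem_geoInterval_iff (preconnected G)] at hw
  by_contra hw'
  have hxw := (preconnected G x w).pos_dist_of_ne fun hxw => hw' (Or.inl (hxw ▸ hx))
  have hwy := (preconnected G w y).pos_dist_of_ne fun hwy => hw' (Or.inr (hwy ▸ hy))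
  have huv : u ≠ v := fun huv => h (huv ▸ .rfl)
  have hll := dist_inl_inl_of_not_reachable h
  have hlr := dist_inl_inr_of_ne (G := G) huv
  have hrl := dist_inr_inl_of_ne (G := G) huv
  have hrr := dist_inr_inr_of_not_reachable h
  rcases w with c | c <;>
    simp only [Set.mem_union, Set.mem_insert_iff, Set.mem_singleton_iff, inl.injEq, inr.injEq,
      reduceCtorEq, or_false, false_or, not_or] at hw' <;> obtain ⟨hcu, hcv⟩ := hw'
  · have hfar : (compPrism G).dist (inl u) (inl c) = 3 ∨ (compPrism G).dist (inl c) (inl v) = 3 := by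
      by_cases huc : G.Reachable u c
      · exact Or.inr (dist_inl_inl_of_not_reachable fun hcv => h (huc.trans hcv))
      · exact Or.inl (dist_inl_inl_of_not_reachable huc)
    have hcl := dist_inl_inr_of_ne (G := G) hcv
    have hrc := dist_inr_inl_of_ne (G := G) (Ne.symm hcu)
    rcases hx with rfl | rfl <;> rcases hy with rfl | rfl <;> omega
  · have hlc := dist_inl_inr_of_ne (G := G) (Ne.symm hcu)
    have hcl := dist_inr_inl_of_ne (G := G) hcv
    rcases hx with rfl | rfl <;> rcases hy with rfl | rfl <;> omega

theorem isGeoConvex_image_inl_union_image_inr {R : Set V}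
    (hR : R.Pairwise fun u v => ¬G.Reachable u v) :
    IsGeoConvex (compPrism G) (inl '' R ∪ inr '' R) := by
  have hpair : ∀ {x}, x ∈ inl '' R ∪ inr '' R → ∃ u ∈ R, x ∈ ({inl u, inr u} : Set (V ⊕ V)) := by
    rintro x (⟨u, hu, rfl⟩ | ⟨u, hu, rfl⟩) <;> exact ⟨u, hu, by simp⟩
  have hsub : ∀ {u}, u ∈ R → ({inl u, inr u} : Set (V ⊕ V)) ⊆ inl '' R ∪ inr '' R :=
    fun hu => Set.insert_subset_iff.2
      ⟨Or.inl ⟨_, hu, rfl⟩, Set.singleton_subset_iff.2 (Or.inr ⟨_, hu, rfl⟩)⟩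
  intro x hx y hy
  obtain ⟨u, hu, hxu⟩ := hpair hx
  obtain ⟨v, hv, hyv⟩ := hpair hy
  by_cases huv : u = v
  · subst huv
    have hxy : (compPrism G).dist x y ≤ 1 := by
      rcases hxu with rfl | rfl <;> rcases hyv with rfl | rfl <;> simp
    exact (geoInterval_subset_of_dist_le_one (preconnected G) hxy).trans
      (Set.insert_subset_iff.2 ⟨hx, Set.singleton_subset_iff.2 hy⟩)
  · exact (geoInterval_subset_of_not_reachable (hR hu hv huv) hxu hyv).trans
      (Set.union_subset (hsub hu) (hsub hv))

theorem isGeoConvex_compl_image_inl_supp (C : G.ConnectedComponent) :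
    IsGeoConvex (compPrism G) (inl '' C.supp)ᶜ := by
  have hexit : ∀ {z d}, z ∉ inl '' C.supp → d ∈ C.supp → (compPrism G).Adj z (inl d) →
      z = inr d := by
    rintro (c | c) d hz hd hadj
    · exact absurd ⟨c, C.mem_supp_of_adj_mem_supp hd hadj.symm, rfl⟩ hz
    · rw [adj_inr_inl.1 hadj]
  have hpos : ∀ {z d}, z ∉ inl '' C.supp → d ∈ C.supp → 0 < (compPrism G).dist z (inl d) :=
    fun hz hd => (preconnected G _ _).pos_dist_of_ne fun h => hz ⟨_, hd, h.symm⟩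
  -- the only neighbour of `inl d` outside the set is `inr d`, which is within distance `2` of
  -- everything, so no geodesic of length at most `3` runs `inr d, inl d, …`
  have hfirst : ∀ {x y d}, x ∉ inl '' C.supp → y ∉ inl '' C.supp → d ∈ C.supp →
      (compPrism G).dist x (inl d) + (compPrism G).dist (inl d) y = (compPrism G).dist x y →
      (compPrism G).dist x (inl d) ≠ 1 := by
    intro x y d hx hy hd hsum hxd
    obtain rfl := hexit hx hd (dist_eq_one_iff_adj.1 hxd)
    have hyd : (compPrism G).dist (inl d) y = 1 := by
      have := dist_inr_le_two (G := G) d y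
      have := hpos hy hd
      rw [dist_inr_inl_self] at hsum
      rw [SimpleGraph.dist_comm] at this
      omega
    obtain rfl := hexit hy hd (dist_eq_one_iff_adj.1 hyd).symm
    simp at hsum
  rintro x hx y hy w hw ⟨d, hd, rfl⟩
  rw [mem_geoInterval_iff (preconnected G)] at hw
  have hw' : (compPrism G).dist y (inl d) + (compPrism G).dist (inl d) x =
      (compPrism G).dist y x := by
    rw [SimpleGraph.dist_comm (u := y), SimpleGraph.dist_comm (v := x),
      SimpleGraph.dist_comm (u := y)]
    omega
  have := hfirst hx hy hd hw
  have := hfirst hy hx hd hw'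
  have := hpos hx hd
  have := hpos hy hd
  have := dist_le_three (G := G) x y
  have := SimpleGraph.dist_comm (G := compPrism G) (u := inl d) (v := y)
  omega

theorem exists_inl_mem_of_isHullSet {T : Set (V ⊕ V)} (hT : IsHullSet (compPrism G) T)
    (C : G.ConnectedComponent) : ∃ d ∈ C.supp, inl d ∈ T := by
  by_contra! h
  have huniv := hT.eq_univ_of_subset (isGeoConvex_compl_image_inl_supp C)
    (by rintro x hx ⟨d, hd, rfl⟩; exact h d hd hx)
  obtain ⟨d, hd⟩ := C.nonempty_supp
  exact Set.eq_univ_iff_forall.1 huniv (inl d) ⟨d, hd, rfl⟩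

theorem card_connectedComponent_lt_ncard [Finite V] {C : G.ConnectedComponent}
    (hC : C.supp.Nontrivial) {T : Set (V ⊕ V)} (hT : IsHullSet (compPrism G) T) :
    Nat.card G.ConnectedComponent < T.ncard := by
  choose φ hφ hφT using exists_inl_mem_of_isHullSet hT
  have hφ' : ∀ E, G.connectedComponentMk (φ E) = E := hφ
  have hφinj : φ.Injective := fun E F h => by rw [← hφ' E, ← hφ' F, h]
  have hR : (Set.range φ).Pairwise fun u v => ¬G.Reachable u v := by
    rintro _ ⟨E, rfl⟩ _ ⟨F, rfl⟩ hne hr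
    exact hne (congrArg φ (by rw [← hφ' E, ← hφ' F]; exact ConnectedComponent.sound hr))
  have hsub : inl '' Set.range φ ⊆ T := by
    rintro _ ⟨_, ⟨E, rfl⟩, rfl⟩
    exact hφT E
  -- otherwise `T` lies in the convex set `inl '' R ∪ inr '' R`, which misses a vertex of `C`
  have hne : inl '' Set.range φ ≠ T := by
    rintro heq
    have huniv := hT.eq_univ_of_subset (isGeoConvex_image_inl_union_image_inr hR)
      (heq ▸ Set.subset_union_left)
    have hrep : ∀ d ∈ C.supp, d = φ C := by
      intro d hd
      obtain ⟨_, ⟨E, rfl⟩, h⟩ | ⟨_, -, h⟩ := Set.eq_univ_iff_forall.1 huniv (inl d)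
      · obtain rfl := inl_injective h
        rw [← hφ' E, hd]
      · exact absurd h inr_ne_inl
    obtain ⟨a, ha, b, hb, hab⟩ := hC
    exact hab ((hrep a ha).trans (hrep b hb).symm)
  calc Nat.card G.ConnectedComponent = (inl '' Set.range φ).ncard := by
        rw [Set.ncard_image_of_injective _ inl_injective, Set.ncard_range_of_injective hφinj]
    _ < T.ncard := Set.ncard_lt_ncard (hsub.ssubset_of_ne hne)

theorem isHullSet_image_inl {R : Set V} (hR : ∀ C : G.ConnectedComponent, ∃ r ∈ R, r ∈ C.supp)
    {u u' x y : V} (hu : u ∈ R) (hu' : u' ∈ R) (huu' : G.Adj u u') (hxy : G.Adj x y)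
    (hux : ¬G.Reachable u x) : IsHullSet (compPrism G) (inl '' R) := by
  set K := geoHull (compPrism G) (inl '' R)
  have hK : IsGeoConvex (compPrism G) K := isGeoConvex_geoHull _ _
  have hinl : ∀ r ∈ R, inl r ∈ K := fun r hr => subset_geoHull _ _ ⟨r, hr, rfl⟩
  have hinr : ∀ r ∈ R, inr r ∈ K := by
    intro r hr
    obtain ⟨w, hw⟩ := G.exists_not_reachable r
    obtain ⟨s, hs, hsw⟩ := hR (G.connectedComponentMk w)
    have hrs : ¬G.Reachable r s := fun h => hw (h.trans (ConnectedComponent.exact hsw))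
    exact hK _ (hinl r hr) _ (hinl s hs) (inr_mem_geoInterval_inl_inl hrs)
  have hfar : ∀ {a b}, G.Adj a b → inr a ∈ K → inr b ∈ K → ∀ c, ¬G.Reachable a c → inr c ∈ K :=
    fun hab ha hb c hc => hK _ ha _ hb (inr_mem_geoInterval_inr_inr hab hc)
  have hfar_u := hfar huu' (hinr u hu) (hinr u' hu')
  have hallr : ∀ c, inr c ∈ K := by
    intro c
    by_cases huc : G.Reachable u c
    · exact hfar hxy (hfar_u x hux) (hfar_u y fun h => hux (h.trans hxy.reachable.symm)) c
        fun h => hux (huc.trans h.symm)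
    · exact hfar_u c huc
  have halll : ∀ c, inl c ∈ K := by
    intro c
    obtain ⟨r, hr, hrc⟩ := hR (G.connectedComponentMk c)
    exact (ConnectedComponent.exact hrc).mem_of_adj_closed (A := {c | inl c ∈ K})
      (fun a b hab ha => hK _ (hallr b) _ ha (inl_mem_geoInterval_inr_inl hab.symm)) (hinl r hr)
  exact Set.eq_univ_of_forall fun | inl c => halll c | inr c => hallr c

end compPrism

theorem hullNumber_compPrism_disconnected_general {V : Type*} [Fintype V] (G : SimpleGraph V)
    (k : ℕ) (hk : k = Nat.card G.ConnectedComponent)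
    (hnt : ∃ C D : G.ConnectedComponent, C ≠ D ∧
      C.supp.Nontrivial ∧ D.supp.Nontrivial) :
    hullNumber (compPrism G) = k + 1 := by
  obtain ⟨C, D, hCD, hC, hD⟩ := hnt
  have : Nontrivial G.ConnectedComponent := ⟨C, D, hCD⟩
  have hout : ∀ E : G.ConnectedComponent, G.connectedComponentMk E.out = E := Quot.out_eq
  obtain ⟨u', hu'⟩ := ConnectedComponent.exists_adj_of_supp_nontrivial hC (hout C)
  obtain ⟨y, hy⟩ := ConnectedComponent.exists_adj_of_supp_nontrivial hD (hout D)
  have hCD' : ¬G.Reachable C.out D.out := fun h => hCD (by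
    rw [← hout C, ← hout D]; exact ConnectedComponent.sound h)
  have hu'R : u' ∉ Set.range (Quot.out : G.ConnectedComponent → V) := by
    rintro ⟨E, rfl⟩
    have hEC : E = C := by
      rw [← hout E, ← hout C]; exact (ConnectedComponent.sound hu'.reachable).symm
    exact hu'.ne (by rw [hEC])
  refine hullNumber_eq_of_isHullSet
    (compPrism.isHullSet_image_inl (R := insert u' (Set.range Quot.out))
      (fun E => ⟨E.out, Or.inr ⟨E, rfl⟩, hout E⟩) (Or.inr ⟨C, rfl⟩) (Or.inl rfl) hu' hy hCD')
    ?_ fun T hT => hk ▸ compPrism.card_connectedComponent_lt_ncard hC hT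
  have hinj : (Quot.out : G.ConnectedComponent → V).Injective :=
    Function.LeftInverse.injective hout
  rw [Set.ncard_image_of_injective _ inl_injective, Set.ncard_insert_of_notMem hu'R,
    Set.ncard_range_of_injective hinj, hk]
  rfl

theorem hullNumber_compPrism_disconnected {V : Type*} [Fintype V] (G : SimpleGraph V)
    (k : ℕ) (hk : k = Nat.card G.ConnectedComponent) (hk2 : 2 ≤ k)
    (hnt : ∃ C D : G.ConnectedComponent, C ≠ D ∧
      C.supp.Nontrivial ∧ D.supp.Nontrivial) :
    hullNumber (compPrism G) = k + 1 :=
  hullNumber_compPrism_disconnected_general G k hk hnt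
end

section
/- Let G be a disconnected graph with exactly one nontrivial connected component and t > 0 trivial components. Then the geodetic hull number of the complementary prism satisfies h(G\bar{G}) ≥ t + 2. -/
open SimpleGraph

/-!
For an isolated vertex `u` of `G`, its copy in `G` is a pendant vertex of `G G̅` attached to `u̅`,
and a pendant vertex is interior to no shortest path, so it lies in every hull set; this accounts
for `t` vertices. If a hull set had at most one further vertex, lying over `a` say, it would be
contained in `{a, a̅} ∪ {u, u̅ : u isolated}`. This set is convex: `{a} ∪ {a̅} ∪ {u̅ : u isolated}`
has diameter two with `a̅` the only relevant common neighbour, and attaching pendant vertices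
preserves convexity. It misses every vertex `b ≠ a` of the nontrivial component, a contradiction.
-/

namespace SimpleGraph

variable {W : Type*} {H : SimpleGraph W}

lemma geoInterval_comm (p q : W) : geoInterval H p q = geoInterval H q p := by
  ext w
  have hsum : H.dist p w + H.dist w q = H.dist p q ↔ H.dist q w + H.dist w p = H.dist q p := by
    rw [dist_comm (u := p) (v := w), dist_comm (u := w) (v := q), dist_comm (u := p) (v := q),
      add_comm]
  simp only [geoInterval, Set.mem_ofPred_eq, reachable_comm (u := p), hsum]
  tauto

lemma dist_add_dist_of_mem_geoInterval {p q w : W} (hw : w ∈ geoInterval H p q) (hwp : w ≠ p)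
    (hwq : w ≠ q) : H.dist p w + H.dist w q = H.dist p q := by
  rcases hw with rfl | rfl | ⟨-, h⟩
  exacts [absurd rfl hwp, absurd rfl hwq, h]

lemma isHullSet_univ : IsHullSet H Set.univ :=
  Set.eq_univ_of_univ_subset (Set.subset_sInter fun _ hT => hT.2)

lemma IsHullSet.eq_univ_of_subset {S T : Set W} (hS : IsHullSet H S) (hT : IsGeoConvex H T)
    (hST : S ⊆ T) : T = Set.univ :=
  Set.eq_univ_of_univ_subset (hS ▸ Set.sInter_subset_of_mem ⟨hT, hST⟩)

lemma le_hullNumber {n : ℕ} (h : ∀ S, IsHullSet H S → n ≤ S.ncard) : n ≤ hullNumber H :=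
  le_csInf ⟨_, Set.univ, rfl, isHullSet_univ⟩ fun _ ⟨S, hn, hS⟩ => hn ▸ h S hS

/-- Intervals between vertices at distance at most two consist of the endpoints and their
common neighbours. -/
lemma isGeoConvex_of_dist_le_two (hH : H.Preconnected) {K : Set W}
    (hdist : ∀ p ∈ K, ∀ q ∈ K, H.dist p q ≤ 2)
    (hmid : ∀ p ∈ K, ∀ q ∈ K, ∀ w, H.dist p q = 2 → H.Adj p w → H.Adj w q → w ∈ K) :
    IsGeoConvex H K := by
  intro p hp q hq w hw
  by_cases hwp : w = p
  · exact hwp ▸ hp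
  by_cases hwq : w = q
  · exact hwq ▸ hq
  have hsum := dist_add_dist_of_mem_geoInterval hw hwp hwq
  have h₁ := (hH p w).pos_dist_of_ne (Ne.symm hwp)
  have h₂ := (hH w q).pos_dist_of_ne hwq
  have h₃ := hdist p hp q hq
  exact hmid p hp q hq w (by omega) (dist_eq_one_iff_adj.1 (by omega))
    (dist_eq_one_iff_adj.1 (by omega))

section Pendant

variable {x y : W}

lemma dist_eq_dist_add_one_of_neighborSet_eq_singleton (hH : H.Preconnected)
    (hx : H.neighborSet x = {y}) {w : W} (hw : w ≠ x) : H.dist x w = H.dist y w + 1 := by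
  have hxy : H.Adj x y := by simp [← mem_neighborSet, hx]
  refine le_antisymm ?_ ?_
  · calc H.dist x w ≤ H.dist x y + H.dist y w := hxy.reachable.dist_triangle_left w
      _ = H.dist y w + 1 := by rw [dist_eq_one_iff_adj.2 hxy, add_comm]
  · obtain ⟨p, hp⟩ := (hH x w).exists_walk_length_eq_dist
    cases p with
    | nil => exact absurd rfl hw
    | cons hxz q =>
      obtain rfl : _ = y := by simpa [hx] using (mem_neighborSet H x _).2 hxz
      simpa [← hp] using dist_le q

lemma isGeoConvex_compl_singleton (hH : H.Preconnected) (hx : H.neighborSet x = {y}) :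
    IsGeoConvex H {x}ᶜ := by
  rintro p hp q hq w hw (rfl : w = x)
  have hsum := dist_add_dist_of_mem_geoInterval hw (Ne.symm hp) (Ne.symm hq)
  have hwp : H.dist p w = H.dist p y + 1 := by
    rw [dist_comm, dist_comm (u := p)]
    exact dist_eq_dist_add_one_of_neighborSet_eq_singleton hH hx hp
  have hwq := dist_eq_dist_add_one_of_neighborSet_eq_singleton hH hx hq
  have htri : H.dist p q ≤ H.dist p y + H.dist y q := (hH p y).dist_triangle_left q
  omega

lemma mem_of_isHullSet_of_neighborSet_eq_singleton (hH : H.Preconnected)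
    (hx : H.neighborSet x = {y}) {S : Set W} (hS : IsHullSet H S) : x ∈ S := by
  by_contra hxS
  have := hS.eq_univ_of_subset (isGeoConvex_compl_singleton hH hx)
    (Set.subset_compl_singleton_iff.2 hxS)
  exact (this ▸ Set.mem_univ x : x ∈ ({x}ᶜ : Set W)) rfl

lemma geoInterval_subset_insert_of_neighborSet_eq_singleton (hH : H.Preconnected)
    (hx : H.neighborSet x = {y}) (q : W) :
    geoInterval H x q ⊆ insert x (geoInterval H y q) := by
  intro w hw
  by_cases hwx : w = x
  · exact Or.inl hwx
  by_cases hwq : w = q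
  · exact Or.inr (Or.inr (Or.inl hwq))
  have hsum := dist_add_dist_of_mem_geoInterval hw hwx hwq
  have hqx : q ≠ x := by
    rintro rfl
    have := (hH q w).pos_dist_of_ne (Ne.symm hwx)
    simp only [dist_self] at hsum
    omega
  have hxw := dist_eq_dist_add_one_of_neighborSet_eq_singleton hH hx hwx
  have hxq := dist_eq_dist_add_one_of_neighborSet_eq_singleton hH hx hqx
  exact Or.inr (Or.inr (Or.inr ⟨hH y q, by omega⟩))

lemma IsGeoConvex.union_of_neighborSet_eq_singleton (hH : H.Preconnected) {K P : Set W}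
    (hK : IsGeoConvex H K) (hP : ∀ x ∈ P, ∃ y ∈ K, H.neighborSet x = {y}) :
    IsGeoConvex H (K ∪ P) := by
  have hKP : ∀ p ∈ K, ∀ q ∈ K ∪ P, geoInterval H p q ⊆ K ∪ P := by
    rintro p hp q (hq | hq)
    · exact (hK p hp q hq).trans Set.subset_union_left
    · obtain ⟨y, hy, hqy⟩ := hP q hq
      rw [geoInterval_comm]
      refine (geoInterval_subset_insert_of_neighborSet_eq_singleton hH hqy p).trans ?_
      exact Set.insert_subset (Or.inr hq) ((hK y hy p hp).trans Set.subset_union_left)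
  rintro p (hp | hp) q hq
  · exact hKP p hp q hq
  · obtain ⟨y, hy, hpy⟩ := hP p hp
    exact (geoInterval_subset_insert_of_neighborSet_eq_singleton hH hpy q).trans
      (Set.insert_subset (Or.inr hp) (hKP y hy q hq))

end Pendant

section Isolated

variable {V : Type*} {G : SimpleGraph V}

lemma IsIsolated.eq_of_reachable {u v : V} (hv : G.IsIsolated v) (h : G.Reachable u v) :
    u = v := by
  by_contra huv
  exact (mem_support_iff_not_isIsolated G).1 (mem_support_of_reachable (Ne.symm huv) h.symm) hv

lemma supp_connectedComponentMk_nontrivial_iff {v : V} :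
    (G.connectedComponentMk v).supp.Nontrivial ↔ ¬ G.IsIsolated v := by
  constructor
  · rintro ⟨u, hu, w, hw, huw⟩ hv
    rw [ConnectedComponent.mem_supp_iff, ConnectedComponent.eq] at hu hw
    exact huw ((hv.eq_of_reachable hu).trans (hv.eq_of_reachable hw).symm)
  · intro hv
    obtain ⟨w, hvw⟩ := exists_adj_iff_not_isIsolated.2 hv
    exact ⟨v, rfl, w, ConnectedComponent.connectedComponentMk_eq_of_adj hvw.symm, hvw.ne⟩

lemma card_trivial_connectedComponent :
    Nat.card {C : G.ConnectedComponent // ¬ C.supp.Nontrivial} =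
      {v | G.IsIsolated v}.ncard := by
  rw [← Nat.card_coe_set_eq]
  symm
  refine Nat.card_congr (Equiv.ofBijective
    (fun v => ⟨G.connectedComponentMk v, supp_connectedComponentMk_nontrivial_iff.not_left.2 v.2⟩)
    ⟨?_, ?_⟩)
  · rintro ⟨u, hu⟩ ⟨v, hv⟩ huv
    exact Subtype.ext (hv.eq_of_reachable (ConnectedComponent.exact (congrArg Subtype.val huv)))
  · rintro ⟨C, hC⟩
    induction C using ConnectedComponent.ind with
    | h v => exact ⟨⟨v, not_not.1 (supp_connectedComponentMk_nontrivial_iff.not.1 hC)⟩, rfl⟩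

end Isolated

end SimpleGraph

section CompPrism

variable {V : Type*} {G : SimpleGraph V}

@[simp] lemma compPrism_adj_inl_inl {u v : V} :
    (compPrism G).Adj (.inl u) (.inl v) ↔ G.Adj u v := .rfl

@[simp] lemma compPrism_adj_inr_inr {u v : V} :
    (compPrism G).Adj (.inr u) (.inr v) ↔ u ≠ v ∧ ¬ G.Adj u v := .rfl

@[simp] lemma compPrism_adj_inl_inr {u v : V} :
    (compPrism G).Adj (.inl u) (.inr v) ↔ u = v := .rfl

@[simp] lemma compPrism_adj_inr_inl {u v : V} :
    (compPrism G).Adj (.inr u) (.inl v) ↔ u = v := .rfl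

/-- The vertex `i̅` is adjacent to every other vertex of `G̅`. -/
lemma compPrism_preconnected_of_isIsolated {i : V} (hi : G.IsIsolated i) :
    (compPrism G).Preconnected := by
  have hreach : ∀ z, (compPrism G).Reachable z (.inr i) := by
    have hinr : ∀ v, (compPrism G).Reachable (.inr v) (.inr i) := fun v => by
      by_cases hvi : v = i
      · rw [hvi]
      · exact Adj.reachable (show (compPrism G).Adj _ _ from ⟨hvi, fun h => hi v h.symm⟩)
    rintro (v | v)
    · exact (Adj.reachable (by simp)).trans (hinr v)
    · exact hinr v
  exact fun p q => (hreach p).trans (hreach q).symm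

lemma compPrism_neighborSet_inl_of_isIsolated {u : V} (hu : G.IsIsolated u) :
    (compPrism G).neighborSet (.inl u) = {.inr u} := by
  ext (v | v) <;> simp [hu v, eq_comm]

lemma compPrism_dist_inr_inr_le_one {u v : V} (huv : ¬ G.Adj u v) :
    (compPrism G).dist (.inr u) (.inr v) ≤ 1 := by
  by_cases h : u = v
  · simp [h]
  · exact (dist_eq_one_iff_adj.2 (compPrism_adj_inr_inr.2 ⟨h, huv⟩)).le

/-- For an independent set `A ∋ a` of `G`, the set `{a} ∪ A̅` has diameter two in `G G̅`, and
`a̅` is the only common neighbour of `a` and a vertex of `A̅`. -/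
lemma isGeoConvex_compPrism_insert_inl_image_inr (hH : (compPrism G).Preconnected) {A : Set V}
    (hA : ∀ u ∈ A, ∀ v ∈ A, ¬ G.Adj u v) {a : V} (ha : a ∈ A) :
    IsGeoConvex (compPrism G) (insert (.inl a) (.inr '' A)) := by
  have hmid : ∀ v ∈ A, ∀ w, (compPrism G).Adj (.inl a) w → (compPrism G).Adj w (.inr v) →
      w ∈ insert (.inl a) (.inr '' A) := by
    rintro v hv (z | z) haz hzv
    · simp only [compPrism_adj_inl_inl, compPrism_adj_inl_inr] at haz hzv
      exact absurd (hzv ▸ haz) (hA a ha v hv)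
    · simp only [compPrism_adj_inl_inr] at haz
      exact Or.inr ⟨a, ha, haz ▸ rfl⟩
  have hdist : ∀ v ∈ A, (compPrism G).dist (.inl a) (.inr v) ≤ 2 := fun v hv =>
    calc (compPrism G).dist (.inl a) (.inr v)
        ≤ (compPrism G).dist (.inl a) (.inr a) + (compPrism G).dist (.inr a) (.inr v) :=
          (hH _ _).dist_triangle_left _
      _ ≤ 1 + 1 := add_le_add (dist_eq_one_iff_adj.2 rfl).le
          (compPrism_dist_inr_inr_le_one (hA a ha v hv))
  apply isGeoConvex_of_dist_le_two hH
  · rintro _ (rfl | ⟨u, hu, rfl⟩) _ (rfl | ⟨v, hv, rfl⟩)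
    · simp
    · exact hdist v hv
    · exact dist_comm (G := compPrism G) ▸ hdist u hu
    · exact (compPrism_dist_inr_inr_le_one (hA u hu v hv)).trans one_le_two
  · rintro _ (rfl | ⟨u, hu, rfl⟩) _ (rfl | ⟨v, hv, rfl⟩) w hd hpw hwq
    · simp at hd
    · exact hmid v hv w hpw hwq
    · exact hmid u hu w hwq.symm hpw.symm
    · have := compPrism_dist_inr_inr_le_one (hA u hu v hv)
      omega

lemma isGeoConvex_compPrism_isolated (hH : (compPrism G).Preconnected) (a : V) :
    IsGeoConvex (compPrism G) (insert (.inl a) (.inr '' insert a {v | G.IsIsolated v}) ∪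
      .inl '' {v | G.IsIsolated v}) := by
  have hA : ∀ u ∈ insert a {v | G.IsIsolated v}, ∀ v ∈ insert a {v | G.IsIsolated v},
      ¬ G.Adj u v := by
    rintro u (rfl | hu) v (rfl | hv) huv
    exacts [G.irrefl huv, hv _ huv.symm, hu v huv, hu v huv]
  refine IsGeoConvex.union_of_neighborSet_eq_singleton hH
    (isGeoConvex_compPrism_insert_inl_image_inr hH hA (Set.mem_insert a _)) ?_
  rintro _ ⟨u, hu, rfl⟩
  exact ⟨.inr u, Or.inr ⟨u, Or.inr hu, rfl⟩, compPrism_neighborSet_inl_of_isIsolated hu⟩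

end CompPrism

theorem hullNumber_compPrism_one_nontrivial_lb_general {V : Type*} [Fintype V]
    (G : SimpleGraph V) (t : ℕ)
    (C₁ : G.ConnectedComponent) (hC₁ : C₁.supp.Nontrivial)
    (ht : t = Nat.card {C : G.ConnectedComponent // ¬ C.supp.Nontrivial})
    (ht0 : 0 < t) :
    t + 2 ≤ hullNumber (compPrism G) := by
  rw [card_trivial_connectedComponent] at ht
  set I := {v | G.IsIsolated v}
  obtain ⟨i, hi⟩ : I.Nonempty := Set.nonempty_of_ncard_ne_zero (by omega)
  have hH := compPrism_preconnected_of_isIsolated hi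
  have hC₁I : ∀ b ∈ C₁.supp, ¬ G.IsIsolated b := fun b hb =>
    supp_connectedComponentMk_nontrivial_iff.1 ((C₁.mem_supp_iff b).1 hb ▸ hC₁)
  refine le_hullNumber fun S hS => ?_
  have hIS : .inl '' I ⊆ S := by
    rintro _ ⟨u, hu, rfl⟩
    exact mem_of_isHullSet_of_neighborSet_eq_singleton hH
      (compPrism_neighborSet_inl_of_isIsolated hu) hS
  have hrest : 1 < (S \ .inl '' I).ncard := by
    by_contra! hle
    have : Nonempty V := ⟨i⟩
    obtain ⟨x, hx⟩ := (Set.ncard_le_one_iff_subset_singleton (Set.toFinite _)).1 hle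
    obtain ⟨a, hxa⟩ : ∃ a, x ∈ insert (.inl a) (.inr '' insert a I) := by
      rcases x with c | c
      exacts [⟨c, Or.inl rfl⟩, ⟨c, Or.inr ⟨c, Or.inl rfl, rfl⟩⟩]
    have hST : S ⊆ insert (.inl a) (.inr '' insert a I) ∪ .inl '' I := fun s hs => by
      by_cases hsI : s ∈ .inl '' I
      · exact Or.inr hsI
      · exact Or.inl ((hx ⟨hs, hsI⟩ : s = x) ▸ hxa)
    obtain ⟨b, hb, hba⟩ : ∃ b ∈ C₁.supp, b ≠ a := hC₁.exists_ne a
    have hbT := (hS.eq_univ_of_subset (isGeoConvex_compPrism_isolated hH a) hST).symm ▸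
      Set.mem_univ (Sum.inl b)
    exact hC₁I b hb (by simpa [hba] using hbT)
  rw [← Set.ncard_sdiff_add_ncard_of_subset hIS, Set.ncard_image_of_injective _ Sum.inl_injective]
  omega

theorem hullNumber_compPrism_one_nontrivial_lb {V : Type*} [Fintype V]
    (G : SimpleGraph V) (t : ℕ) (hdisc : ¬ G.Connected)
    (C₁ : G.ConnectedComponent) (hC₁ : C₁.supp.Nontrivial)
    (huniq : ∀ C : G.ConnectedComponent, C.supp.Nontrivial → C = C₁)
    (ht : t = Nat.card {C : G.ConnectedComponent // ¬ C.supp.Nontrivial})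
    (ht0 : 0 < t) :
    t + 2 ≤ hullNumber (compPrism G) :=
  hullNumber_compPrism_one_nontrivial_lb_general G t C₁ hC₁ ht ht0
end
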